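/- Let f₁, …, f_m : ℝⁿ → ℝ be differentiable, let x ∈ ℝⁿ, and let B ∈ ℝ^{n×n} be a symmetric positive definite matrix. Let d(x) be the unique minimizer of d ↦ max_{i∈[m]} ⟨∇f_i(x), d⟩ + ½ dᵀBd and θ(x) its minimum value. Then the following are equivalent: (i) x is not Pareto critical for (f₁, …, f_m); (ii) d(x) ≠ 0; (iii) θ(x) < 0. -/

import Mathlib

open RealInnerProductSpace

noncomputable def maxInner {n m : ℕ} (hm : 0 < m) (g : Fin m → EuclideanSpace ℝ (Fin n))
    (d : EuclideanSpace ℝ (Fin n)) : ℝ :=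
  Finset.univ.sup' ⟨⟨0, hm⟩, Finset.mem_univ _⟩ fun i => ⟪g i, d⟫

noncomputable def quadForm {n : ℕ} (B : Matrix (Fin n) (Fin n) ℝ)
    (d : EuclideanSpace ℝ (Fin n)) : ℝ :=
  ⟪d, Matrix.toEuclideanLin B d⟫

lemma maxInner_zero {n m : ℕ} (hm : 0 < m) (g : Fin m → EuclideanSpace ℝ (Fin n)) :
    maxInner hm g 0 = 0 := by
  simp [maxInner]
  exact Finset.sup'_const _ _

lemma maxInner_smul {n m : ℕ} (hm : 0 < m) (g : Fin m → EuclideanSpace ℝ (Fin n))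
    (t : ℝ) (ht : 0 ≤ t) (d : EuclideanSpace ℝ (Fin n)) :
    maxInner hm g (t • d) = t * maxInner hm g d := by
  unfold maxInner
  erw [Finset.comp_sup'_eq_sup'_comp _ (fun r : ℝ => t * r)
    (fun a b => by simpa using (mul_max_of_nonneg a b ht))]
  refine Finset.sup'_congr _ rfl fun i _ => ?_
  simp [Function.comp, PiLp.inner_apply, Finset.mul_sum]
  exact Finset.sum_congr rfl fun j _ => by ring

lemma quadForm_smul {n : ℕ} (B : Matrix (Fin n) (Fin n) ℝ) (t : ℝ)
    (d : EuclideanSpace ℝ (Fin n)) : quadForm B (t • d) = t^2 * quadForm B d := by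
  simp [quadForm, real_inner_smul_left, real_inner_smul_right, map_smul, PiLp.inner_apply,
    Finset.mul_sum]
  exact Finset.sum_congr rfl fun j _ => by ring

lemma quadForm_pos {n : ℕ} {B : Matrix (Fin n) (Fin n) ℝ} (hB : B.PosDef)
    {d : EuclideanSpace ℝ (Fin n)} (hd : d ≠ 0) : 0 < quadForm B d := by
  have := hB.dotProduct_mulVec_pos (x := fun i => d i) (by
    intro h
    apply hd
    ext i
    exact congrFun h i)
  simpa [quadForm, Matrix.toEuclideanLin_apply, PiLp.inner_apply, dotProduct,
    RCLike.inner_apply, WithLp.equiv, mul_comm] using this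

lemma quadForm_zero {n : ℕ} (B : Matrix (Fin n) (Fin n) ℝ) : quadForm B 0 = 0 := by
  simp [quadForm]

def ParetoCritical {n m : ℕ} (f : Fin m → EuclideanSpace ℝ (Fin n) → ℝ)
    (x : EuclideanSpace ℝ (Fin n)) : Prop :=
  ∀ d : EuclideanSpace ℝ (Fin n), ∃ i : Fin m, 0 ≤ ⟪gradient (f i) x, d⟫

/-- the following are equivalent: (i) `x` is not Pareto critical;
(ii) `d(x) ≠ 0`; (iii) `θ(x) < 0`, where `d(x)` minimizes
`d ↦ max_i ⟪∇f_i(x), d⟫ + ½ dᵀBd` and `θ(x)` is the minimum value. -/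
theorem stmt_7 (n m : ℕ) (hm : 0 < m) (f : Fin m → EuclideanSpace ℝ (Fin n) → ℝ)
    (hf : ∀ i, Differentiable ℝ (f i)) (x : EuclideanSpace ℝ (Fin n))
    (B : Matrix (Fin n) (Fin n) ℝ) (hB : B.PosDef)
    (dx : EuclideanSpace ℝ (Fin n))
    (hdx : ∀ d : EuclideanSpace ℝ (Fin n),
      maxInner hm (fun i => gradient (f i) x) dx + quadForm B dx / 2 ≤
        maxInner hm (fun i => gradient (f i) x) d + quadForm B d / 2) :
    (¬ ParetoCritical f x ↔ dx ≠ 0) ∧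
    (dx ≠ 0 ↔ maxInner hm (fun i => gradient (f i) x) dx + quadForm B dx / 2 < 0) := by
  set g : Fin m → EuclideanSpace ℝ (Fin n) := fun i => gradient (f i) x with hg
  -- Claim A : dx ≠ 0 → θ < 0
  have claimA : dx ≠ 0 → maxInner hm g dx + quadForm B dx / 2 < 0 := by
    intro h
    have hQ := quadForm_pos hB h
    have h2 := hdx ((1/2 : ℝ) • dx)
    rw [maxInner_smul hm g (1/2) (by norm_num) dx, quadForm_smul] at h2
    linarith
  -- Claim B : θ < 0 → dx ≠ 0
  have claimB : maxInner hm g dx + quadForm B dx / 2 < 0 → dx ≠ 0 := by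
    intro h h0
    rw [h0, maxInner_zero, quadForm_zero] at h
    norm_num at h
  -- Claim C : Pareto critical → 0 ≤ θ
  have claimC : ParetoCritical f x → 0 ≤ maxInner hm g dx + quadForm B dx / 2 := by
    intro hPC
    obtain ⟨i, hi⟩ := hPC dx
    have h1 : (0 : ℝ) ≤ maxInner hm g dx := by
      unfold maxInner
      exact le_trans hi (Finset.le_sup' (fun j => ⟪g j, dx⟫) (Finset.mem_univ i))
    have h2 : (0 : ℝ) ≤ quadForm B dx := by
      rcases eq_or_ne dx 0 with h | h
      · simp [h, quadForm_zero]
      · exact (quadForm_pos hB h).le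
    linarith
  -- Claim D : ¬ Pareto critical → θ < 0
  have claimD : ¬ ParetoCritical f x → maxInner hm g dx + quadForm B dx / 2 < 0 := by
    intro hPC
    unfold ParetoCritical at hPC
    push_neg at hPC
    obtain ⟨d, hd⟩ := hPC
    have hM : maxInner hm g d < 0 := by
      unfold maxInner
      refine (Finset.sup'_lt_iff _).mpr ?_
      intro i _
      exact hd i
    have hdne : d ≠ 0 := by
      intro h0
      have := hd ⟨0, hm⟩
      rw [h0, inner_zero_right] at this
      exact lt_irrefl 0 this
    have hQ : 0 < quadForm B d := quadForm_pos hB hdne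
    set M := maxInner hm g d
    set Q := quadForm B d
    set t : ℝ := -M / (Q + 1) with ht
    have htpos : 0 < t := div_pos (by linarith) (by linarith)
    have hval : t * M + t ^ 2 * Q / 2 < 0 := by
      rw [ht]
      rw [div_pow, div_mul_eq_mul_div, div_mul_eq_mul_div, div_div]
      rw [div_add_div _ _ (by positivity) (by positivity)]
      apply div_neg_of_neg_of_pos _ (by positivity)
      nlinarith [sq_nonneg M, sq_nonneg (Q+1)]
    calc maxInner hm g dx + quadForm B dx / 2
        ≤ maxInner hm g (t • d) + quadForm B (t • d) / 2 := hdx (t • d)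
      _ = t * M + t ^ 2 * Q / 2 := by
          rw [maxInner_smul hm g t htpos.le, quadForm_smul]
      _ < 0 := hval
  exact ⟨⟨fun h => claimB (claimD h), fun h hPC => absurd (claimA h) (not_lt.2 (claimC hPC))⟩,
    ⟨claimA, claimB⟩⟩
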